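/- arXiv:2604.23223 — 2 statements merged into one kernel-verified Lean document; each statement's English description precedes it below -/
import Mathlib

section
/- For all natural numbers n and l (with no restriction between them), the sum over i from 0 to l of C(n-i, i) * C(l+i, 2i+1) equals the sum over i from 0 to l of C(n-i, i-1) * C(l+i, 2i), where for a negative upper index m < 0 and k ≥ 0 one defines C(m, k) := (-1)^k * C(k - m - 1, k), and C(m, k) := 0 for k < 0. Here n - i is interpreted as an integer, so terms with i > n use the generalized binomial coefficient. -/
/-!
Write `F(n, l, b) = ∑_{i=0}^{l} C(n - i, i) C(l + i, 2i + b)`. After the shift `i ↦ i + 1` on the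
right, the theorem reads `F(n, l, 1) = F(n - 1, l + 1, 2)`, and we prove
`F(n, l, b) = F(n - 1, l + 1, b + 1)` for every integer `n`. Pascal's rule in the first factor gives
`F(n, l, b) = F(n - 1, l, b) + F(n - 2, l + 1, b + 2)`, and in the second factor
`F(n - 1, l + 1, b + 1) = F(n - 1, l, b + 1) + F(n - 1, l, b)`. So the defect
`G(n, l, b) = F(n, l, b) - F(n - 1, l + 1, b + 1)` satisfies `G(n, l, b) = -G(n - 1, l, b + 1)`,
and it vanishes once `b > l` because then every `C(l + i, 2i + b)` is zero.
-/

open Finset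

/-- Generalized binomial coefficient: classical for nonnegative upper index,
`(-1)^k * C(k-m-1, k)` for negative upper index, and `0` for negative lower index. -/
def gchoose (m k : ℤ) : ℤ :=
  if k < 0 then 0
  else if m < 0 then (-1) ^ k.toNat * ((k - m - 1).toNat.choose k.toNat : ℤ)
  else (m.toNat.choose k.toNat : ℤ)

theorem gchoose_of_neg_right (m : ℤ) {k : ℤ} (hk : k < 0) : gchoose m k = 0 :=
  if_pos hk

theorem gchoose_eq_ringChoose (m : ℤ) {k : ℤ} (hk : 0 ≤ k) :
    gchoose m k = Ring.choose m k.toNat := by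
  rw [gchoose, if_neg hk.not_gt]
  split_ifs with hm
  · obtain ⟨r, rfl⟩ : ∃ r : ℕ, m = -r := ⟨m.natAbs, by omega⟩
    have hcast : ((r : ℤ) + k.toNat - 1) = ((k - -r - 1).toNat : ℕ) := by omega
    rw [Ring.choose_neg, hcast, Ring.choose_natCast, Units.smul_def, Int.coe_negOnePow_natCast,
      smul_eq_mul]
  · lift m to ℕ using not_lt.1 hm
    rw [Ring.choose_natCast, Int.toNat_natCast]

theorem gchoose_eq_zero_of_lt {m k : ℤ} (hm : 0 ≤ m) (hmk : m < k) : gchoose m k = 0 := by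
  rw [gchoose_eq_ringChoose m (by omega)]
  lift m to ℕ using hm
  rw [Ring.choose_natCast, Nat.choose_eq_zero_of_lt (by omega), Nat.cast_zero]

theorem gchoose_pascal (m k : ℤ) : gchoose m k = gchoose (m - 1) k + gchoose (m - 1) (k - 1) := by
  rcases lt_trichotomy k 0 with hk | rfl | hk
  · simp [gchoose_of_neg_right, hk, show k - 1 < 0 by omega]
  · simp [gchoose_eq_ringChoose, gchoose_of_neg_right]
  · obtain ⟨j, rfl⟩ : ∃ j : ℕ, k = j + 1 := ⟨(k - 1).toNat, by omega⟩
    rw [gchoose_eq_ringChoose _ (by omega), gchoose_eq_ringChoose _ (by omega),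
      gchoose_eq_ringChoose _ (by omega), add_sub_cancel_right]
    simpa [add_comm] using Ring.choose_succ_succ (m - 1) j

def fibChooseSum (n : ℤ) (l b : ℕ) : ℤ :=
  ∑ i ∈ range (l + 1), gchoose (n - i) i * gchoose (l + i) (2 * i + b)

theorem fibChooseSum_eq_sum_range (n : ℤ) {l b N : ℕ} (hN : l < N + b) :
    fibChooseSum n l b = ∑ i ∈ range N, gchoose (n - i) i * gchoose (l + i) (2 * i + b) := by
  have hvanish : ∀ i : ℕ, l < i + b → gchoose (n - i) i * gchoose (l + i) (2 * i + b) = 0 :=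
    fun i hi ↦ mul_eq_zero_of_right _ (gchoose_eq_zero_of_lt (by omega) (by omega))
  rcases le_total (l + 1) N with h | h
  · exact sum_subset (range_subset_range.2 h) fun i _ hi ↦ hvanish i (by rw [mem_range] at hi; omega)
  · exact (sum_subset (range_subset_range.2 h) fun i _ hi ↦ hvanish i (by rw [mem_range] at hi; omega)).symm

theorem fibChooseSum_eq_zero (n : ℤ) {l b : ℕ} (h : l < b) : fibChooseSum n l b = 0 := by
  rw [fibChooseSum_eq_sum_range n (N := 0) (by omega), sum_range_zero]

theorem fibChooseSum_pascal_left (n : ℤ) (l b : ℕ) :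
    fibChooseSum n l b = fibChooseSum (n - 1) l b + fibChooseSum (n - 2) (l + 1) (b + 2) := by
  rw [fibChooseSum_eq_sum_range n (N := l + 2) (by omega),
    fibChooseSum_eq_sum_range (n - 1) (N := l + 2) (by omega),
    fibChooseSum_eq_sum_range (n - 2) (N := l + 1) (by omega)]
  have hsplit (i : ℕ) : gchoose (n - i) i * gchoose (l + i) (2 * i + b) =
      gchoose (n - 1 - i) i * gchoose (l + i) (2 * i + b) +
        gchoose (n - 1 - i) (i - 1) * gchoose (l + i) (2 * i + b) := by
    rw [gchoose_pascal (n - i), sub_right_comm, add_mul]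
  rw [sum_congr rfl fun i _ ↦ hsplit i, sum_add_distrib,
    sum_range_succ' (fun i : ℕ ↦ gchoose (n - 1 - i) (i - 1) * _)]
  simp only [Nat.cast_zero, zero_sub, gchoose_of_neg_right _ neg_one_lt_zero, zero_mul, add_zero]
  congr 1
  refine sum_congr rfl fun i _ ↦ ?_
  push_cast
  ring_nf

theorem fibChooseSum_pascal_right (n : ℤ) (l b : ℕ) :
    fibChooseSum n (l + 1) (b + 1) = fibChooseSum n l (b + 1) + fibChooseSum n l b := by
  rw [fibChooseSum_eq_sum_range n (N := l + 2) (by omega),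
    fibChooseSum_eq_sum_range n (l := l) (N := l + 2) (by omega),
    fibChooseSum_eq_sum_range n (l := l) (N := l + 2) (by omega), ← sum_add_distrib]
  refine sum_congr rfl fun i _ ↦ ?_
  rw [gchoose_pascal ((l + 1 : ℕ) + i)]
  push_cast
  ring_nf

theorem fibChooseSum_shift (n : ℤ) (l b : ℕ) :
    fibChooseSum n l b = fibChooseSum (n - 1) (l + 1) (b + 1) := by
  induction h : l + 1 - b generalizing n b with
  | zero =>
    rw [fibChooseSum_eq_zero _ (by omega), fibChooseSum_eq_zero _ (by omega)]
  | succ k ih =>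
    have hshift := ih (n - 1) (b + 1) (by omega)
    rw [sub_sub, one_add_one_eq_two] at hshift
    rw [fibChooseSum_pascal_left n, fibChooseSum_pascal_right (n - 1) l b, hshift, add_comm]

theorem sum_Icc_zero_eq_sum_range {M : Type*} [AddCommMonoid M] (f : ℤ → M) (l : ℕ) :
    ∑ i ∈ Icc (0 : ℤ) l, f i = ∑ i ∈ range (l + 1), f i := by
  refine sum_nbij' Int.toNat (↑) ?_ ?_ ?_ ?_ fun i hi ↦ by rw [Int.toNat_of_nonneg (mem_Icc.1 hi).1]
  all_goals intro i hi; simp only [mem_Icc, mem_range] at hi ⊢; omega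

theorem stmt_1 (n l : ℕ) :
    ∑ i ∈ Finset.Icc (0 : ℤ) l, gchoose ((n : ℤ) - i) i * gchoose ((l : ℤ) + i) (2 * i + 1)
      = ∑ i ∈ Finset.Icc (0 : ℤ) l, gchoose ((n : ℤ) - i) (i - 1) * gchoose ((l : ℤ) + i) (2 * i) := by
  rw [sum_Icc_zero_eq_sum_range, sum_Icc_zero_eq_sum_range]
  calc _ = fibChooseSum n l 1 := by simp only [fibChooseSum, Nat.cast_one]
    _ = fibChooseSum (n - 1) (l + 1) 2 := fibChooseSum_shift n l 1
    _ = _ := by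
      rw [fibChooseSum_eq_sum_range _ (N := l) (by omega), sum_range_succ' _ l]
      simp only [Nat.cast_zero, zero_sub, gchoose_of_neg_right _ neg_one_lt_zero, zero_mul, add_zero]
      refine sum_congr rfl fun i _ ↦ ?_
      push_cast
      ring_nf
end

section
/- For all natural numbers n and l with l > n, the sum over i from 0 to n of [ -C(n-i, i) * C(l+i, 2i+1) + C(n-i, i-1) * C(l+i, 2i) ] equals (-1)^{n+1} * C(l, n+1), where C denotes the classical binomial coefficient with the convention C(a,b)=0 for b<0 or b>a. -/
/-!
With `F n a b = ∑_{p + i = n} C(p, i) C(a + i, 2i + b)`, Pascal's rule in `C(p, i)` gives the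
Fibonacci-type recursion `F (n + 2) a b = F (n + 1) a b + F n (a + 1) (b + 2)`. Splitting off
the `i = 0` term, for `n ≥ 1` the sum of the theorem is `F (n - 1) (l + 1) 2 - F n l 1`. The
differences `F m (a + 1) (b + 1) - F (m + 1) a b` obey the same recursion, and so does
`(-1)^m C(a, b + m + 1)` by Pascal's rule in `a`; comparing the first two values gives the
identity.
-/

open Finset

def diagonalChooseSum (n a b : ℕ) : ℕ :=
  ∑ x ∈ antidiagonal n, x.1.choose x.2 * (a + x.2).choose (2 * x.2 + b)

namespace diagonalChooseSum

@[simp] lemma zero (a b : ℕ) : diagonalChooseSum 0 a b = a.choose b := by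
  simp [diagonalChooseSum]

@[simp] lemma one (a b : ℕ) : diagonalChooseSum 1 a b = a.choose b := by
  simp [diagonalChooseSum, Nat.antidiagonal_succ']

lemma add_two (n a b : ℕ) :
    diagonalChooseSum (n + 2) a b
      = diagonalChooseSum (n + 1) a b + diagonalChooseSum n (a + 1) (b + 2) := by
  simp only [diagonalChooseSum, Nat.antidiagonal_succ_succ', Nat.antidiagonal_succ', sum_cons,
    sum_map, Nat.choose_zero_succ, zero_mul, Nat.choose_zero_right, add_zero, mul_zero, one_mul,
    Function.Embedding.coe_prodMap, Function.Embedding.coeFn_mk, Prod.map_fst, Prod.map_snd,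
    Nat.succ_eq_add_one, Nat.choose_succ_succ, add_mul, sum_add_distrib, zero_add,
    Function.Embedding.refl_apply]
  have shift (i : ℕ) :
      (a + (i + 1)).choose (2 * (i + 1) + b) = (a + 1 + i).choose (2 * i + (b + 2)) := by
    ring_nf
  simp only [shift]
  omega

lemma shift_sub_succ (m a b : ℕ) :
    (diagonalChooseSum m (a + 1) (b + 1) : ℤ) - diagonalChooseSum (m + 1) a b
      = (-1) ^ m * a.choose (b + m + 1) := by
  induction m using Nat.twoStepInduction generalizing a b with
  | zero => simp [Nat.choose_succ_succ']
  | one =>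
    rw [add_two, one, one, zero, Nat.choose_succ_succ' a b, Nat.choose_succ_succ' a (b + 1)]
    push_cast
    ring
  | more m ih₀ ih₁ =>
    have pascal : ((a + 1).choose (b + 2 + m + 1) : ℤ)
        = a.choose (b + (m + 1) + 1) + a.choose (b + (m + 2) + 1) := by
      rw [show b + 2 + m + 1 = b + (m + 1) + 1 + 1 by ring,
        show b + (m + 2) + 1 = b + (m + 1) + 1 + 1 by ring]
      exact mod_cast Nat.choose_succ_succ' _ _
    rw [add_two, add_two (m + 1)]
    push_cast
    linear_combination ih₁ a b + ih₀ (a + 1) (b + 2) + (-1) ^ m * pascal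

end diagonalChooseSum

lemma gchoose_natCast (m k : ℕ) : gchoose m k = m.choose k := by
  rw [gchoose, if_neg (by omega), if_neg (by omega)]
  simp

lemma gchoose_of_neg {m k : ℤ} (hk : k < 0) : gchoose m k = 0 :=
  if_pos hk

lemma sum_Icc_eq_sum_antidiagonal {M : Type*} [AddCommMonoid M] (n : ℕ) (f : ℤ → ℤ → M) :
    ∑ i ∈ Icc (0 : ℤ) n, f (n - i) i = ∑ x ∈ antidiagonal n, f x.1 x.2 := by
  refine sum_nbij' (fun i => ((n - i).toNat, i.toNat)) (fun x => x.2) ?_ ?_ ?_ ?_ ?_ <;>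
    intro x hx <;> simp only [mem_Icc, HasAntidiagonal.mem_antidiagonal] at hx
  · simp only [HasAntidiagonal.mem_antidiagonal]; omega
  · simp only [mem_Icc]; omega
  · omega
  · ext <;> simp only [Int.toNat_natCast]; omega
  · congr 1 <;> omega

lemma natCast_diagonalChooseSum (n a b : ℕ) :
    (diagonalChooseSum n a b : ℤ)
      = ∑ x ∈ antidiagonal n, gchoose x.1 x.2 * gchoose ((a : ℤ) + x.2) (2 * x.2 + b) := by
  simp only [diagonalChooseSum, Nat.cast_sum, Nat.cast_mul, ← gchoose_natCast]
  push_cast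
  rfl

lemma sum_antidiagonal_succ_gchoose_sub_one (m a : ℕ) :
    ∑ x ∈ antidiagonal (m + 1), gchoose x.1 (x.2 - 1) * gchoose ((a : ℤ) + x.2) (2 * x.2)
      = diagonalChooseSum m (a + 1) 2 := by
  rw [Nat.antidiagonal_succ', sum_cons, sum_map, gchoose_of_neg (by norm_num), zero_mul,
    zero_add, natCast_diagonalChooseSum]
  refine sum_congr rfl fun x _ => ?_
  simp only [Function.Embedding.coe_prodMap, Function.Embedding.coeFn_mk, Prod.map_fst,
    Prod.map_snd, Function.Embedding.refl_apply, Nat.succ_eq_add_one]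
  push_cast
  ring_nf

theorem stmt_7_general (n l : ℕ) :
    ∑ i ∈ Finset.Icc (0 : ℤ) n,
        (-(gchoose ((n : ℤ) - i) i * gchoose ((l : ℤ) + i) (2 * i + 1))
          + gchoose ((n : ℤ) - i) (i - 1) * gchoose ((l : ℤ) + i) (2 * i))
      = (-1) ^ (n + 1) * (l.choose (n + 1) : ℤ) := by
  rw [sum_Icc_eq_sum_antidiagonal n fun p i => -(gchoose p i * gchoose ((l : ℤ) + i) (2 * i + 1))
      + gchoose p (i - 1) * gchoose ((l : ℤ) + i) (2 * i),
    sum_add_distrib, sum_neg_distrib]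
  have hF := natCast_diagonalChooseSum n l 1
  rw [Nat.cast_one] at hF
  rw [← hF]
  cases n with
  | zero => simp [gchoose_of_neg]
  | succ m =>
    rw [sum_antidiagonal_succ_gchoose_sub_one, neg_add_eq_sub, diagonalChooseSum.shift_sub_succ]
    ring_nf

theorem stmt_7 (n l : ℕ) (h : n < l) :
    ∑ i ∈ Finset.Icc (0 : ℤ) n,
        (-(gchoose ((n : ℤ) - i) i * gchoose ((l : ℤ) + i) (2 * i + 1))
          + gchoose ((n : ℤ) - i) (i - 1) * gchoose ((l : ℤ) + i) (2 * i))
      = (-1) ^ (n + 1) * (l.choose (n + 1) : ℤ) :=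
  stmt_7_general n l
end
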